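/- arXiv:2505.22896 — 5 statements merged into one kernel-verified Lean document; each statement's English description precedes it below -/
import Mathlib

section
/- For integer p with |p| ≤ n, the finite sum ((-1)^n π / 2^(2n+1)) · Σ_{k=0}^{2n+1} C(2n+1,k)(-1)^k H(p + n + 1/2 - k) equals (-1)^p (√π/2) Γ(n+1)Γ(n+1/2)/(Γ(n-p+1)Γ(n+p+1)). -/
open Real

/-- The Heaviside step function. -/
noncomputable def H (x : ℝ) : ℝ := if 0 ≤ x then 1 else 0

/-!
Write `p = m - n` with `0 ≤ m ≤ 2n`. Since `m` is an integer, `H (m + 1/2 - k)` cuts the sum off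
at `k = m`, and a partial alternating sum of a row of Pascal's triangle telescopes:
`∑_{k ≤ m} (-1)^k C(2n+1, k) = (-1)^m C(2n, m)`. On the Gamma side, Legendre's duplication
formula gives `Γ(n+1) Γ(n+1/2) = √π (2n)! / 4^n`, and the denominator is `(2n-m)! m!`.
-/

open Finset

lemma H_natCast_add_half_sub_natCast (m k : ℕ) :
    H ((m : ℝ) + 1 / 2 - k) = if k ≤ m then 1 else 0 := by
  unfold H
  congr 1
  apply propext
  constructor
  · intro h
    by_contra! hkm
    have : (m : ℝ) + 1 ≤ k := by exact_mod_cast hkm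
    linarith
  · intro hkm
    have : (k : ℝ) ≤ m := by exact_mod_cast hkm
    linarith

lemma sum_choose_mul_neg_one_pow_mul_H (N m : ℕ) (hm : m ≤ N) :
    ∑ k ∈ range (N + 2), ((N + 1).choose k : ℝ) * (-1) ^ k * H ((m : ℝ) + 1 / 2 - k) =
      (-1) ^ m * N.choose m := by
  have htrunc : ∀ k ∈ range (N + 2), ((N + 1).choose k : ℝ) * (-1) ^ k * H ((m : ℝ) + 1 / 2 - k)
      = if k ∈ range (m + 1) then (-1) ^ k * ((N + 1).choose k : ℝ) else 0 := by
    intro k _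
    simp only [H_natCast_add_half_sub_natCast, mem_range, Nat.lt_succ_iff]
    split_ifs <;> ring
  rw [sum_congr rfl htrunc, sum_ite_mem,
    inter_eq_right.mpr (range_subset_range.2 (by omega : m + 1 ≤ N + 2))]
  exact_mod_cast Int.alternating_sum_range_choose_eq_choose

lemma Gamma_nat_add_one_mul_Gamma_nat_add_half (n : ℕ) :
    Gamma (n + 1) * Gamma (n + 1 / 2) = √π * (2 * n).factorial / 2 ^ (2 * n) := by
  have h := Gamma_mul_Gamma_add_half ((n : ℝ) + 1 / 2)
  rw [show (n : ℝ) + 1 / 2 + 1 / 2 = n + 1 by ring, mul_comm] at h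
  rw [h, show 2 * ((n : ℝ) + 1 / 2) = ((2 * n : ℕ) : ℝ) + 1 by push_cast; ring,
    Gamma_nat_eq_factorial, show (1 : ℝ) - (((2 * n : ℕ) : ℝ) + 1) = -((2 * n : ℕ) : ℝ) by ring,
    rpow_neg zero_le_two, rpow_natCast]
  field_simp

lemma neg_one_zpow_natCast_sub_natCast (m n : ℕ) :
    (-1 : ℝ) ^ ((m : ℤ) - n) = (-1) ^ n * (-1) ^ m := by
  rw [zpow_sub₀ (by norm_num), zpow_natCast, zpow_natCast, div_eq_mul_inv, ← inv_pow, inv_neg,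
    inv_one, mul_comm]

theorem heaviside_sum_eq_gamma (n : ℕ) (p : ℤ) (hp : |p| ≤ (n : ℤ)) :
    ((-1 : ℝ) ^ n * π / 2 ^ (2 * n + 1)) *
      ∑ k ∈ Finset.range (2 * n + 2),
        (Nat.choose (2 * n + 1) k : ℝ) * (-1 : ℝ) ^ k * H ((p : ℝ) + n + 1 / 2 - k) =
    (-1 : ℝ) ^ p * (Real.sqrt π / 2) *
      (Real.Gamma (n + 1) * Real.Gamma (n + 1 / 2)) /
      (Real.Gamma ((n : ℝ) - p + 1) * Real.Gamma ((n : ℝ) + p + 1)) := by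
  obtain ⟨hpl, hpu⟩ := abs_le.1 hp
  obtain ⟨m, hm⟩ := Int.eq_ofNat_of_zero_le (by omega : 0 ≤ p + n)
  obtain rfl : p = m - n := by omega
  have hm2n : m ≤ 2 * n := by omega
  have hshift : (((m : ℤ) - n : ℤ) : ℝ) + n = m := by push_cast; ring
  have hlow : (n : ℝ) - (((m : ℤ) - n : ℤ) : ℝ) = ((2 * n - m : ℕ) : ℝ) := by
    push_cast [hm2n]; ring
  have hhigh : (n : ℝ) + (((m : ℤ) - n : ℤ) : ℝ) = m := by rw [add_comm, hshift]
  rw [hshift, sum_choose_mul_neg_one_pow_mul_H _ _ hm2n, hlow, hhigh,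
    Gamma_nat_add_one_mul_Gamma_nat_add_half, Gamma_nat_eq_factorial, Gamma_nat_eq_factorial,
    neg_one_zpow_natCast_sub_natCast, Nat.cast_choose ℝ hm2n]
  field_simp
  rw [sq_sqrt pi_pos.le]
  ring
end

section
/- For all real u, v > 0 with u ≠ v and all real ν > 0, ∫₀^∞ ∫₀^∞ (x+y)^{ν−1} e^{-ux − vy} dx dy = Γ(ν) · (u^ν − v^ν) / ((u − v)(uv)^ν). -/
open Real MeasureTheory Set Filter
open scoped Topology

/-!
With `T_a(x) = ∫_x^∞ t^(ν-1) e^(-a t) dt`, the substitution `t = x + y` turns the inner integral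
into `e^(-(u-v)x) T_v(x)`. Since `T_a' (x) = -x^(ν-1) e^(-a x)`, this has the antiderivative
`(T_u(x) - e^(-(u-v)x) T_v(x)) / (u - v)`, which vanishes at infinity; hence the double integral
is `(T_v(0) - T_u(0)) / (u - v)`, and `T_a(0) = Γ(ν) / a^ν`.
-/

theorem setIntegral_Ioi_comp_const_add {E : Type*} [NormedAddCommGroup E] [NormedSpace ℝ E]
    (f : ℝ → E) (x : ℝ) : ∫ y in Ioi 0, f (x + y) = ∫ t in Ioi x, f t := by
  have h := (measurePreserving_add_left volume x).setIntegral_preimage_emb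
    (measurableEmbedding_addLeft x) f (Ioi x)
  rwa [preimage_const_add_Ioi, sub_self] at h

/-- `a ^ (-ν)` times the upper incomplete Gamma function `Γ(ν, a x)`. -/
noncomputable def gammaTail (ν a x : ℝ) : ℝ :=
  ∫ t in Ioi x, t ^ (ν - 1) * exp (-(a * t))

section

variable {ν a : ℝ}

theorem integrableOn_rpow_mul_exp_neg_mul (hν : 0 < ν) (ha : 0 < a) :
    IntegrableOn (fun t : ℝ => t ^ (ν - 1) * exp (-(a * t))) (Ioi 0) := by
  simpa only [rpow_one, neg_mul] using
    integrableOn_rpow_mul_exp_neg_mul_rpow (by linarith : -1 < ν - 1) zero_lt_one ha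

theorem gammaTail_zero (hν : 0 < ν) (ha : 0 < a) : gammaTail ν a 0 = Gamma ν / a ^ ν := by
  rw [gammaTail, integral_rpow_mul_exp_neg_mul_Ioi hν ha, div_rpow zero_le_one ha.le, one_rpow]
  ring

theorem gammaTail_nonneg {x : ℝ} (hx : 0 ≤ x) : 0 ≤ gammaTail ν a x :=
  setIntegral_nonneg measurableSet_Ioi fun _ ht =>
    mul_nonneg (rpow_nonneg (hx.trans ht.le) _) (exp_pos _).le

theorem gammaTail_eq_sub_intervalIntegral (hν : 0 < ν) (ha : 0 < a) {x : ℝ} (hx : 0 ≤ x) :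
    gammaTail ν a x = gammaTail ν a 0 - ∫ t in 0..x, t ^ (ν - 1) * exp (-(a * t)) := by
  have hf := integrableOn_rpow_mul_exp_neg_mul hν ha
  rw [gammaTail, gammaTail, intervalIntegral.integral_of_le hx, ← Ioc_union_Ioi_eq_Ioi hx,
    setIntegral_union (Ioc_disjoint_Ioi le_rfl) measurableSet_Ioi
      (hf.mono_set Ioc_subset_Ioi_self) (hf.mono_set (Ioi_subset_Ioi hx))]
  ring

theorem hasDerivAt_gammaTail (hν : 0 < ν) (ha : 0 < a) {x : ℝ} (hx : 0 < x) :
    HasDerivAt (gammaTail ν a) (-(x ^ (ν - 1) * exp (-(a * x)))) x := by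
  have hint : IntervalIntegrable (fun t : ℝ => t ^ (ν - 1) * exp (-(a * t))) volume 0 x :=
    (intervalIntegrable_iff_integrableOn_Ioc_of_le hx.le).mpr
      ((integrableOn_rpow_mul_exp_neg_mul hν ha).mono_set Ioc_subset_Ioi_self)
  have hcont : ContinuousAt (fun t : ℝ => t ^ (ν - 1) * exp (-(a * t))) x := by
    fun_prop (disch := exact Or.inl hx.ne')
  have hmeas : Measurable (fun t : ℝ => t ^ (ν - 1) * exp (-(a * t))) := by fun_prop
  refine ((intervalIntegral.integral_hasDerivAt_right hint
    hmeas.stronglyMeasurable.stronglyMeasurableAtFilter hcont).const_sub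
      (gammaTail ν a 0)).congr_of_eventuallyEq ?_
  filter_upwards [Ioi_mem_nhds hx] with y hy using gammaTail_eq_sub_intervalIntegral hν ha hy.le

theorem continuousWithinAt_gammaTail_zero (hν : 0 < ν) (ha : 0 < a) :
    ContinuousWithinAt (gammaTail ν a) (Ici 0) 0 := by
  have hint : IntegrableOn (fun t : ℝ => t ^ (ν - 1) * exp (-(a * t))) (uIcc 0 1) := by
    rw [uIcc_of_le zero_le_one, integrableOn_Icc_iff_integrableOn_Ioc]
    exact (integrableOn_rpow_mul_exp_neg_mul hν ha).mono_set Ioc_subset_Ioi_self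
  have hprim := (intervalIntegral.continuousOn_primitive_interval hint).continuousWithinAt
    (left_mem_uIcc (b := 1))
  rw [uIcc_of_le zero_le_one] at hprim
  refine ((continuousWithinAt_const.sub hprim).mono_of_mem_nhdsWithin
    (Icc_mem_nhdsGE zero_lt_one)).congr (fun y hy => gammaTail_eq_sub_intervalIntegral hν ha hy)
    (gammaTail_eq_sub_intervalIntegral hν ha le_rfl)

theorem tendsto_gammaTail_atTop (hν : 0 < ν) (ha : 0 < a) :
    Tendsto (gammaTail ν a) atTop (𝓝 0) := by
  have h := tendsto_const_nhds (x := gammaTail ν a 0) |>.sub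
    (intervalIntegral_tendsto_integral_Ioi 0 (integrableOn_rpow_mul_exp_neg_mul hν ha) tendsto_id)
  rw [← gammaTail, sub_self] at h
  refine h.congr' ?_
  filter_upwards [eventually_ge_atTop 0] with x hx
    using (gammaTail_eq_sub_intervalIntegral hν ha hx).symm

end

-- `u - v` may be negative; for `t > x` the growth of `e^(-(u-v)x)` is absorbed by `e^(-v t)`.
theorem exp_mul_gammaTail_le {ν u v c x : ℝ} (hν : 0 < ν) (hc : 0 < c) (hcv : c ≤ v)
    (hcu : 2 * c ≤ u) (hx : 0 ≤ x) :
    exp (-((u - v) * x)) * gammaTail ν v x ≤ exp (-(c * x)) * gammaTail ν c x := by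
  have hint : ∀ {b : ℝ}, 0 < b →
      IntegrableOn (fun t : ℝ => t ^ (ν - 1) * exp (-(b * t))) (Ioi x) :=
    fun hb => (integrableOn_rpow_mul_exp_neg_mul hν hb).mono_set (Ioi_subset_Ioi hx)
  rw [gammaTail, gammaTail, ← integral_const_mul, ← integral_const_mul]
  refine setIntegral_mono_on ((hint (hc.trans_le hcv)).const_mul _) ((hint hc).const_mul _)
    measurableSet_Ioi fun t ht => ?_
  have hexp : exp (-((u - v) * x)) * exp (-(v * t)) ≤ exp (-(c * x)) * exp (-(c * t)) := by
    rw [← exp_add, ← exp_add, exp_le_exp]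
    nlinarith [mem_Ioi.mp ht]
  calc exp (-((u - v) * x)) * (t ^ (ν - 1) * exp (-(v * t)))
      = t ^ (ν - 1) * (exp (-((u - v) * x)) * exp (-(v * t))) := by ring
    _ ≤ t ^ (ν - 1) * (exp (-(c * x)) * exp (-(c * t))) :=
      mul_le_mul_of_nonneg_left hexp (rpow_nonneg (hx.trans (le_of_lt ht)) _)
    _ = exp (-(c * x)) * (t ^ (ν - 1) * exp (-(c * t))) := by ring

theorem tendsto_exp_mul_gammaTail_atTop {ν u v : ℝ} (hν : 0 < ν) (hu : 0 < u) (hv : 0 < v) :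
    Tendsto (fun x => exp (-((u - v) * x)) * gammaTail ν v x) atTop (𝓝 0) := by
  set c := min u v / 2 with hc_def
  have hc : 0 < c := half_pos (lt_min hu hv)
  have hcv : c ≤ v := by linarith [min_le_right u v]
  have hcu : 2 * c ≤ u := by linarith [min_le_left u v]
  have hexp : Tendsto (fun x => exp (-(c * x))) atTop (𝓝 0) :=
    tendsto_exp_neg_atTop_nhds_zero.comp (tendsto_id.const_mul_atTop hc)
  have hbound := hexp.mul (tendsto_gammaTail_atTop hν hc)
  rw [mul_zero] at hbound
  refine squeeze_zero' ?_ ?_ hbound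
  · filter_upwards [eventually_ge_atTop 0] with x hx
      using mul_nonneg (exp_pos _).le (gammaTail_nonneg hx)
  · filter_upwards [eventually_ge_atTop 0] with x hx
    exact exp_mul_gammaTail_le hν hc hcv hcu hx

theorem integral_rpow_add_mul_exp_eq_exp_mul_gammaTail (ν u v x : ℝ) :
    ∫ y in Ioi (0 : ℝ), (x + y) ^ (ν - 1) * exp (-(u * x) - v * y) =
      exp (-((u - v) * x)) * gammaTail ν v x := by
  rw [gammaTail, ← setIntegral_Ioi_comp_const_add (fun t => t ^ (ν - 1) * exp (-(v * t))),
    ← integral_const_mul]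
  refine setIntegral_congr_fun measurableSet_Ioi fun y _ => ?_
  rw [mul_left_comm, ← exp_add]
  ring_nf

theorem hasDerivAt_gammaTail_sub_exp_mul_gammaTail {ν u v x : ℝ} (hν : 0 < ν) (hu : 0 < u)
    (hv : 0 < v) (huv : u ≠ v) (hx : 0 < x) :
    HasDerivAt (fun x => (gammaTail ν u x - exp (-((u - v) * x)) * gammaTail ν v x) / (u - v))
      (exp (-((u - v) * x)) * gammaTail ν v x) x := by
  have hexp : HasDerivAt (fun x => exp (-((u - v) * x))) (exp (-((u - v) * x)) * -(u - v)) x := by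
    simpa using ((hasDerivAt_id x).const_mul (u - v)).neg.exp
  refine (((hasDerivAt_gammaTail hν hu hx).sub
    (hexp.mul (hasDerivAt_gammaTail hν hv hx))).div_const (u - v)).congr_deriv ?_
  have hsplit : exp (-(u * x)) = exp (-((u - v) * x)) * exp (-(v * x)) := by
    rw [← exp_add]; ring_nf
  rw [hsplit]
  field_simp [sub_ne_zero.mpr huv]
  ring

theorem integral_exp_mul_gammaTail {ν u v : ℝ} (hν : 0 < ν) (hu : 0 < u) (hv : 0 < v)
    (huv : u ≠ v) :
    ∫ x in Ioi 0, exp (-((u - v) * x)) * gammaTail ν v x =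
      (gammaTail ν v 0 - gammaTail ν u 0) / (u - v) := by
  have hexp : ContinuousWithinAt (fun x => exp (-((u - v) * x))) (Ici 0) 0 :=
    (by fun_prop : Continuous fun x => exp (-((u - v) * x))).continuousWithinAt
  have hcont : ContinuousWithinAt
      (fun x => (gammaTail ν u x - exp (-((u - v) * x)) * gammaTail ν v x) / (u - v)) (Ici 0) 0 :=
    ((continuousWithinAt_gammaTail_zero hν hu).sub
      (hexp.mul (continuousWithinAt_gammaTail_zero hν hv))).div_const _
  have hlim : Tendsto
      (fun x => (gammaTail ν u x - exp (-((u - v) * x)) * gammaTail ν v x) / (u - v))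
      atTop (𝓝 0) := by
    simpa using ((tendsto_gammaTail_atTop hν hu).sub
      (tendsto_exp_mul_gammaTail_atTop hν hu hv)).div_const (u - v)
  rw [integral_Ioi_of_hasDerivAt_of_nonneg hcont
    (fun x hx => hasDerivAt_gammaTail_sub_exp_mul_gammaTail hν hu hv huv hx)
    (fun x hx => mul_nonneg (exp_pos _).le (gammaTail_nonneg (le_of_lt hx))) hlim]
  simp only [mul_zero, neg_zero, exp_zero, one_mul]
  ring

theorem bivariate_laplace_pow (u v ν : ℝ) (hu : 0 < u) (hv : 0 < v) (huv : u ≠ v)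
    (hν : 0 < ν) :
    (∫ x in Set.Ioi (0:ℝ), ∫ y in Set.Ioi (0:ℝ),
        (x + y) ^ (ν - 1) * Real.exp (-(u * x) - v * y)) =
      Real.Gamma ν * (u ^ ν - v ^ ν) / ((u - v) * (u * v) ^ ν) := by
  simp_rw [integral_rpow_add_mul_exp_eq_exp_mul_gammaTail]
  rw [integral_exp_mul_gammaTail hν hu hv huv, gammaTail_zero hν hu, gammaTail_zero hν hv,
    mul_rpow hu.le hv.le]
  field_simp [sub_ne_zero.mpr huv, (rpow_pos_of_pos hu ν).ne', (rpow_pos_of_pos hv ν).ne']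
end

section
/- For every natural number n ≥ 1, the improper integral ∫_{ℝⁿ} sin(‖x‖)/‖x‖ⁿ dx, defined as the limit of integrals over balls of radius R as R → ∞, equals π^{n/2+1} / Γ(n/2). -/
/-!
In polar coordinates the weight `r ^ (n - 1)` cancels all but one power of `‖x‖`, so the integral
over the ball of radius `R` is `n * vol(B₁) * ∫₀ᴿ sin r / r dr`. The Dirichlet integral
`∫₀ᴿ sin r / r dr` tends to `π / 2`: writing `1 / r = ∫₀^∞ e^{-rt} dt` and swapping the integrals
gives `∫₀^∞ dt / (1 + t²) = π / 2` minus a remainder of size at most `2 / R`. Finally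
`n * vol(B₁) * π / 2 = n π^{n/2} / Γ(n/2 + 1) * π / 2 = π^{n/2 + 1} / Γ(n/2)`.
-/

open Real MeasureTheory Filter Set Metric Module
open scoped Topology

lemma integral_sin_mul_exp_neg_mul (t R : ℝ) :
    ∫ x in (0 : ℝ)..R, sin x * exp (-x * t) =
      (1 - exp (-R * t) * (cos R + t * sin R)) / (1 + t ^ 2) := by
  have hpos : 0 < 1 + t ^ 2 := by positivity
  have hderiv (x : ℝ) : HasDerivAt (fun x ↦ -(exp (-x * t) * (cos x + t * sin x)) / (1 + t ^ 2))
      (sin x * exp (-x * t)) x := by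
    have hexp : HasDerivAt (fun x ↦ exp (-x * t)) (exp (-x * t) * -t) x := by
      simpa using ((hasDerivAt_neg x).mul_const t).exp
    refine (((hexp.mul ((hasDerivAt_cos x).add ((hasDerivAt_sin x).const_mul t))).neg).div_const
      (1 + t ^ 2)).congr_deriv ?_
    simp only [Pi.add_apply]
    field_simp
    ring
  rw [intervalIntegral.integral_eq_sub_of_hasDerivAt (fun x _ ↦ hderiv x)
    ((by fun_prop : Continuous fun x ↦ sin x * exp (-x * t)).intervalIntegrable _ _)]
  simp only [neg_zero, zero_mul, exp_zero, cos_zero, sin_zero]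
  ring

lemma integrableOn_exp_neg_mul_Ioi {x : ℝ} (hx : 0 < x) :
    IntegrableOn (fun t ↦ exp (-x * t)) (Ioi 0) :=
  integrableOn_exp_mul_Ioi (neg_neg_of_pos hx) 0

lemma integral_exp_neg_mul_Ioi {x : ℝ} (hx : 0 < x) :
    ∫ t in Ioi 0, exp (-x * t) = x⁻¹ := by
  rw [integral_exp_mul_Ioi (neg_neg_of_pos hx)]
  simp

/-- `∫₀ᴿ sin x * exp (-x * t) dx = 1 / (1 + t ^ 2) - dirichletRemainder R t`. -/
noncomputable def dirichletRemainder (R t : ℝ) : ℝ :=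
  exp (-R * t) * (cos R + t * sin R) / (1 + t ^ 2)

lemma abs_dirichletRemainder_le (R : ℝ) {t : ℝ} (ht : 0 ≤ t) :
    |dirichletRemainder R t| ≤ 2 * exp (-R * t) := by
  have htrig : |cos R + t * sin R| ≤ 1 + t := by
    calc |cos R + t * sin R| ≤ |cos R| + t * |sin R| := by
          simpa [abs_mul, abs_of_nonneg ht] using abs_add_le (cos R) (t * sin R)
      _ ≤ 1 + t * 1 := by gcongr <;> [exact abs_cos_le_one R; exact abs_sin_le_one R]
      _ = 1 + t := by ring
  have hpos : 0 < 1 + t ^ 2 := by positivity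
  rw [dirichletRemainder, abs_div, abs_mul, abs_exp, abs_of_pos hpos, div_le_iff₀ hpos]
  calc exp (-R * t) * |cos R + t * sin R| ≤ exp (-R * t) * (1 + t) := by gcongr
    _ ≤ 2 * exp (-R * t) * (1 + t ^ 2) := by nlinarith [exp_pos (-R * t), sq_nonneg (t - 1)]

lemma integrableOn_dirichletRemainder {R : ℝ} (hR : 0 < R) :
    IntegrableOn (dirichletRemainder R) (Ioi 0) := by
  refine ((integrableOn_exp_neg_mul_Ioi hR).const_mul 2).mono' ?_ ?_
  · exact (by unfold dirichletRemainder; fun_prop (disch := exact fun t ↦ by positivity) :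
      Continuous (dirichletRemainder R)).aestronglyMeasurable
  filter_upwards [ae_restrict_mem measurableSet_Ioi] with t ht
  exact abs_dirichletRemainder_le R (le_of_lt ht)

lemma abs_integral_dirichletRemainder_le {R : ℝ} (hR : 0 < R) :
    |∫ t in Ioi 0, dirichletRemainder R t| ≤ 2 * R⁻¹ := by
  calc ‖∫ t in Ioi 0, dirichletRemainder R t‖ ≤ ∫ t in Ioi 0, 2 * exp (-R * t) := by
        refine norm_integral_le_of_norm_le ((integrableOn_exp_neg_mul_Ioi hR).const_mul 2) ?_
        filter_upwards [ae_restrict_mem measurableSet_Ioi] with t ht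
        exact abs_dirichletRemainder_le R (le_of_lt ht)
    _ = 2 * R⁻¹ := by rw [integral_const_mul, integral_exp_neg_mul_Ioi hR]

lemma integrable_sin_mul_exp_neg_mul_prod (R : ℝ) :
    Integrable (fun p : ℝ × ℝ ↦ sin p.1 * exp (-p.1 * p.2))
      ((volume.restrict (Ioc 0 R)).prod (volume.restrict (Ioi 0))) := by
  rw [integrable_prod_iff (by fun_prop)]
  constructor
  · filter_upwards [ae_restrict_mem measurableSet_Ioc] with x hx
    exact (integrableOn_exp_neg_mul_Ioi hx.1).const_mul _
  · refine (integrable_const (1 : ℝ)).mono' ?_ ?_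
    · exact (by fun_prop : Continuous fun p : ℝ × ℝ ↦ ‖sin p.1 * exp (-p.1 * p.2)‖)
        |>.stronglyMeasurable.integral_prod_right' |>.aestronglyMeasurable
    · filter_upwards [ae_restrict_mem measurableSet_Ioc] with x hx
      simp only [norm_mul, norm_eq_abs, abs_exp]
      rw [integral_const_mul, integral_exp_neg_mul_Ioi hx.1, abs_mul, abs_abs, abs_inv,
        abs_of_pos hx.1, ← div_eq_mul_inv, div_le_one hx.1]
      exact (abs_sin_le_abs).trans_eq (abs_of_pos hx.1)

lemma integral_Ioc_sin_div_eq {R : ℝ} (hR : 0 < R) :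
    ∫ x in Ioc 0 R, sin x / x = π / 2 - ∫ t in Ioi 0, dirichletRemainder R t := by
  calc ∫ x in Ioc 0 R, sin x / x = ∫ x in Ioc 0 R, ∫ t in Ioi 0, sin x * exp (-x * t) := by
        refine setIntegral_congr_fun measurableSet_Ioc fun x hx ↦ ?_
        rw [integral_const_mul, integral_exp_neg_mul_Ioi hx.1, div_eq_mul_inv]
    _ = ∫ t in Ioi 0, ∫ x in Ioc 0 R, sin x * exp (-x * t) :=
        integral_integral_swap (integrable_sin_mul_exp_neg_mul_prod R)
    _ = ∫ t in Ioi 0, ((1 + t ^ 2)⁻¹ - dirichletRemainder R t) := by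
        refine setIntegral_congr_fun measurableSet_Ioi fun t _ ↦ ?_
        rw [← intervalIntegral.integral_of_le hR.le, integral_sin_mul_exp_neg_mul,
          dirichletRemainder, sub_div, one_div]
    _ = π / 2 - ∫ t in Ioi 0, dirichletRemainder R t := by
        rw [integral_sub integrable_inv_one_add_sq.integrableOn
          (integrableOn_dirichletRemainder hR), integral_Ioi_inv_one_add_sq, arctan_zero, sub_zero]

theorem tendsto_integral_Ioc_sin_div :
    Tendsto (fun R ↦ ∫ x in Ioc 0 R, sin x / x) atTop (𝓝 (π / 2)) := by
  have hrem : Tendsto (fun R ↦ ∫ t in Ioi 0, dirichletRemainder R t) atTop (𝓝 0) := by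
    refine squeeze_zero_norm' ?_ (by simpa using tendsto_inv_atTop_zero.const_mul (2 : ℝ))
    filter_upwards [eventually_gt_atTop 0] with R hR
    exact abs_integral_dirichletRemainder_le hR
  simpa using (tendsto_const_nhds.sub hrem).congr'
    (eventually_gt_atTop 0 |>.mono fun R hR ↦ (integral_Ioc_sin_div_eq hR).symm)

section Radial

variable {E F : Type*} [NormedAddCommGroup E] [NormedSpace ℝ E] [FiniteDimensional ℝ E]
  [Nontrivial E] [MeasurableSpace E] [BorelSpace E] (μ : Measure E) [μ.IsAddHaarMeasure]
  [NormedAddCommGroup F] [NormedSpace ℝ F]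

theorem setIntegral_closedBall_fun_norm_addHaar (f : ℝ → F) (R : ℝ) :
    ∫ x in closedBall 0 R, f ‖x‖ ∂μ =
      finrank ℝ E • μ.real (ball 0 1) • ∫ y in Ioc 0 R, y ^ (finrank ℝ E - 1) • f y := by
  have hind (x : E) : (closedBall 0 R).indicator (fun x ↦ f ‖x‖) x = (Iic R).indicator f ‖x‖ := by
    by_cases hx : ‖x‖ ≤ R <;> simp [indicator, hx]
  rw [← integral_indicator measurableSet_closedBall]
  simp_rw [hind]
  rw [integral_fun_norm_addHaar μ, ← indicator_smul (Iic R) (fun y ↦ y ^ (finrank ℝ E - 1)) f,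
    setIntegral_indicator measurableSet_Iic, Ioi_inter_Iic]

theorem setIntegral_closedBall_sin_norm_div_norm_pow (R : ℝ) :
    ∫ x in closedBall 0 R, sin ‖x‖ / ‖x‖ ^ finrank ℝ E ∂μ =
      finrank ℝ E * μ.real (ball 0 1) * ∫ y in Ioc 0 R, sin y / y := by
  rw [setIntegral_closedBall_fun_norm_addHaar μ (fun r ↦ sin r / r ^ finrank ℝ E), nsmul_eq_mul,
    smul_eq_mul, mul_assoc]
  congr 2
  refine setIntegral_congr_fun measurableSet_Ioc fun y hy ↦ ?_
  have hy : y ≠ 0 := hy.1.ne'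
  rw [smul_eq_mul, pow_sub₀ y hy finrank_pos, pow_one]
  field_simp

theorem tendsto_setIntegral_closedBall_sin_norm_div_norm_pow :
    Tendsto (fun R ↦ ∫ x in closedBall 0 R, sin ‖x‖ / ‖x‖ ^ finrank ℝ E ∂μ) atTop
      (𝓝 (finrank ℝ E * μ.real (ball 0 1) * (π / 2))) := by
  simpa only [setIntegral_closedBall_sin_norm_div_norm_pow] using
    tendsto_integral_Ioc_sin_div.const_mul _

end Radial

-- At `s = 0` both sides are `0`, through the junk value `Gamma 0 = 0`.
theorem mul_div_Gamma_add_one (s x : ℝ) : s * x / Gamma (s + 1) = x / Gamma s := by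
  rcases eq_or_ne s 0 with rfl | hs
  · simp
  · rw [Gamma_add_one hs, mul_div_mul_left _ _ hs]

theorem EuclideanSpace.volume_real_ball_zero_one (n : ℕ) [Nonempty (Fin n)] :
    volume.real (ball (0 : EuclideanSpace ℝ (Fin n)) 1) = √π ^ n / Gamma (n / 2 + 1) := by
  rw [measureReal_def, EuclideanSpace.volume_ball, Fintype.card_fin, ENNReal.ofReal_one, one_pow,
    one_mul, ENNReal.toReal_ofReal (by positivity)]

theorem natCast_mul_sqrt_pi_pow_div_Gamma (n : ℕ) :
    n * (√π ^ n / Gamma (n / 2 + 1)) * (π / 2) = π ^ ((n : ℝ) / 2 + 1) / Gamma (n / 2) := by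
  have hsqrt : √π ^ n = π ^ ((n : ℝ) / 2) := by
    rw [sqrt_eq_rpow, ← rpow_natCast, ← rpow_mul pi_pos.le]
    ring_nf
  rw [← mul_div_Gamma_add_one ((n : ℝ) / 2), hsqrt, rpow_add_one pi_ne_zero]
  ring

theorem integral_sin_norm_div_norm_pow (n : ℕ) (hn : 1 ≤ n) :
    Tendsto (fun R : ℝ =>
        ∫ x in Metric.closedBall (0 : EuclideanSpace ℝ (Fin n)) R,
          Real.sin ‖x‖ / ‖x‖ ^ n)
      atTop
      (nhds (π ^ ((n : ℝ) / 2 + 1) / Real.Gamma ((n : ℝ) / 2))) := by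
  have : Nonempty (Fin n) := ⟨⟨0, hn⟩⟩
  have h := tendsto_setIntegral_closedBall_sin_norm_div_norm_pow
    (volume : Measure (EuclideanSpace ℝ (Fin n)))
  rwa [finrank_euclideanSpace_fin, EuclideanSpace.volume_real_ball_zero_one,
    natCast_mul_sqrt_pi_pow_div_Gamma] at h
end

section
/- For real a > 0, ∫_ℝ (a sin y − y cos y) / (y (a² + y²)) dy = π (1 − 2e^{-a})/a, where the integral is an improper (principal value / conditionally convergent) integral over ℝ. -/
/-!
Away from `y = 0` the integrand equals `(a * sinc y - cos y) / (a ^ 2 + y ^ 2)`, which is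
absolutely integrable, so the symmetric limit is a Lebesgue integral. Fourier inversion for
`exp (-b * |x|)`, whose transform is `2 * b / (b ^ 2 + (2 * π * ξ) ^ 2)`, gives
`∫ cos (t * y) / (a ^ 2 + y ^ 2) = π / a * exp (-a * |t|)`. Integrating this over `t ∈ [0, 1]`
and using `∫ t in 0..1, cos (t * y) = sinc y` (Fubini) gives
`∫ sinc y / (a ^ 2 + y ^ 2) = π / a ^ 2 * (1 - exp (-a))`.
-/

open Real Filter MeasureTheory Set FourierTransform

section

variable {a : ℝ}

theorem integrable_inv_sq_add_sq (ha : a ≠ 0) :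
    Integrable fun y : ℝ => (a ^ 2 + y ^ 2)⁻¹ := by
  refine ((integrable_inv_one_add_sq.comp_div ha).const_mul (a ^ 2)⁻¹).congr
    (.of_forall fun y => ?_)
  simp only
  field_simp

theorem integrable_div_sq_add_sq_of_abs_le_one {g : ℝ → ℝ} (hg : AEStronglyMeasurable g)
    (hg_le : ∀ y, |g y| ≤ 1) (ha : a ≠ 0) :
    Integrable fun y => g y / (a ^ 2 + y ^ 2) :=
  ((integrable_inv_sq_add_sq ha).bdd_mul hg (c := 1) (.of_forall hg_le)).congr
    (.of_forall fun _ => (div_eq_mul_inv _ _).symm)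

theorem integrable_cexp_neg_mul_abs (ha : 0 < a) :
    Integrable fun x : ℝ => (exp (-(a * |x|)) : ℂ) := by
  rw [← integrableOn_univ, ← Iic_union_Ioi (a := 0)]
  refine IntegrableOn.union ?_ ?_
  · refine (integrableOn_exp_mul_complex_Iic (a := a) (by simpa using ha) 0).congr_fun
      (fun x hx => ?_) measurableSet_Iic
    rw [abs_of_nonpos hx]
    push_cast
    ring_nf
  · refine (integrableOn_exp_mul_complex_Ioi (a := -a) (by simpa using ha) 0).congr_fun
      (fun x hx => ?_) measurableSet_Ioi
    rw [abs_of_pos hx]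
    push_cast
    ring_nf

theorem fourier_cexp_neg_mul_abs (ha : 0 < a) (ξ : ℝ) :
    𝓕 (fun x : ℝ => (exp (-(a * |x|)) : ℂ)) ξ =
      (2 * a / (a ^ 2 + (2 * π * ξ) ^ 2) : ℝ) := by
  set z : ℂ := 2 * π * ξ * Complex.I
  set f := fun x : ℝ =>
    Complex.exp (↑(-2 * π * x * ξ) * Complex.I) • (exp (-(a * |x|)) : ℂ)
  have hf : Integrable f := (integrable_cexp_neg_mul_abs ha).bdd_mul (c := 1) (by fun_prop)
    (.of_forall fun _ => (Complex.norm_exp_ofReal_mul_I _).le)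
  have hIic : EqOn f (fun x => Complex.exp ((a - z) * x)) (Iic 0) := fun x hx => by
    simp only [f, z, smul_eq_mul, abs_of_nonpos (show x ≤ 0 from hx), Complex.ofReal_exp,
      ← Complex.exp_add]
    push_cast
    ring_nf
  have hIoi : EqOn f (fun x => Complex.exp (-(a + z) * x)) (Ioi 0) := fun x hx => by
    simp only [f, z, smul_eq_mul, abs_of_pos (show 0 < x from hx), Complex.ofReal_exp,
      ← Complex.exp_add]
    push_cast
    ring_nf
  have hsub : 0 < ((a : ℂ) - z).re := by simpa [z] using ha
  have hadd : (-((a : ℂ) + z)).re < 0 := by simpa [z] using ha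
  rw [fourier_real_eq_integral_exp_smul,
    ← intervalIntegral.integral_Iic_add_Ioi hf.integrableOn hf.integrableOn,
    setIntegral_congr_fun measurableSet_Iic hIic, setIntegral_congr_fun measurableSet_Ioi hIoi,
    integral_exp_mul_complex_Iic hsub, integral_exp_mul_complex_Ioi hadd]
  have hsub_ne : (a : ℂ) - z ≠ 0 := fun h => by simp [h] at hsub
  have hadd_ne : (a : ℂ) + z ≠ 0 := fun h => by simp [h] at hadd
  have hz : (a : ℂ) ^ 2 + (2 * π * ξ) ^ 2 = (a - z) * (a + z) := by
    linear_combination (2 * π * ξ : ℂ) ^ 2 * Complex.I_sq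
  push_cast
  rw [hz]
  simp only [mul_zero, Complex.exp_zero]
  field_simp
  ring

theorem integral_cos_mul_div_sq_add_sq (ha : 0 < a) (t : ℝ) :
    ∫ y, cos (t * y) / (a ^ 2 + y ^ 2) = π / a * exp (-(a * |t|)) := by
  -- At `b = 2 * π * a` the transform of `exp (-b * |x|)` is a multiple of `(a ^ 2 + ξ ^ 2)⁻¹`,
  -- so inverting at `t / (2 * π)` needs no change of variables.
  have hb : 0 < 2 * π * a := by positivity
  set g : ℝ → ℝ := fun y => a / π * (a ^ 2 + y ^ 2)⁻¹ with hg_def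
  have hF : 𝓕 (fun x : ℝ => (exp (-(2 * π * a * |x|)) : ℂ)) = fun y => (g y : ℂ) := by
    funext y
    rw [fourier_cexp_neg_mul_abs hb, hg_def]
    congr 1
    field_simp
  have hg : Integrable g := (integrable_inv_sq_add_sq ha.ne').const_mul _
  have hcont : Continuous fun x : ℝ => (exp (-(2 * π * a * |x|)) : ℂ) := by fun_prop
  have hinv := congrFun (hcont.fourierInv_fourier_eq (integrable_cexp_neg_mul_abs hb)
    (hF ▸ hg.ofReal)) (t / (2 * π))
  have hinner : ∀ y : ℝ, 2 * π * inner ℝ y (t / (2 * π)) = t * y := fun y => by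
    rw [Real.inner_apply]
    field_simp
  have hexp : 2 * π * a * |t / (2 * π)| = a * |t| := by
    rw [abs_div, abs_of_pos (by positivity : 0 < 2 * π)]
    field_simp
  rw [hF, fourierInv_eq'] at hinv
  simp only [hinner, hexp, smul_eq_mul] at hinv
  have hint : Integrable fun y : ℝ => Complex.exp (↑(t * y) * Complex.I) * (g y : ℂ) :=
    hg.ofReal.bdd_mul (c := 1) (by fun_prop)
      (.of_forall fun _ => (Complex.norm_exp_ofReal_mul_I _).le)
  have hre := congrArg Complex.re hinv
  rw [← Complex.reCLM_apply, ← Complex.reCLM.integral_comp_comm hint] at hre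
  simp only [Complex.reCLM_apply, Complex.re_mul_ofReal, Complex.exp_ofReal_mul_I_re,
    Complex.ofReal_re] at hre
  rw [← hre, ← integral_const_mul]
  congr 1 with y
  simp only [hg_def]
  field_simp

theorem integral_cos_mul_eq_sinc (y : ℝ) : ∫ t in (0 : ℝ)..1, cos (t * y) = sinc y := by
  rcases eq_or_ne y 0 with rfl | hy
  · simp
  · rw [intervalIntegral.integral_comp_mul_right cos hy, integral_cos, sinc_of_ne_zero hy]
    simp [div_eq_inv_mul]

theorem integral_sinc_div_sq_add_sq (ha : 0 < a) :
    ∫ y, sinc y / (a ^ 2 + y ^ 2) = π / a ^ 2 * (1 - exp (-a)) := by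
  have hprod : Integrable (Function.uncurry fun t y : ℝ => cos (t * y) / (a ^ 2 + y ^ 2))
      ((volume.restrict (uIoc 0 1)).prod volume) := by
    rw [uIoc_of_le zero_le_one]
    exact (((integrable_const (1 : ℝ)).mul_prod (integrable_inv_sq_add_sq ha.ne')).bdd_mul
      (c := 1) (f := fun p : ℝ × ℝ => cos (p.1 * p.2)) (by fun_prop)
      (.of_forall fun _ => by simpa using abs_cos_le_one _)).congr
      (.of_forall fun _ => by simp [Function.uncurry_def, div_eq_mul_inv])
  calc ∫ y, sinc y / (a ^ 2 + y ^ 2)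
      = ∫ y, ∫ t in (0 : ℝ)..1, cos (t * y) / (a ^ 2 + y ^ 2) := by
        simp_rw [intervalIntegral.integral_div, integral_cos_mul_eq_sinc]
    _ = ∫ t in (0 : ℝ)..1, π / a * exp (-a * t) := by
        rw [← intervalIntegral_integral_swap hprod]
        refine intervalIntegral.integral_congr fun t ht => ?_
        rw [uIcc_of_le zero_le_one] at ht
        simp only [integral_cos_mul_div_sq_add_sq ha, abs_of_nonneg ht.1, neg_mul]
    _ = π / a ^ 2 * (1 - exp (-a)) := by
        rw [intervalIntegral.integral_const_mul,
          intervalIntegral.integral_comp_mul_left exp (neg_ne_zero.mpr ha.ne'), integral_exp,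
          mul_zero, mul_one, exp_zero, smul_eq_mul]
        field_simp
        ring

end

theorem auxiliary_heaviside_integral (a : ℝ) (ha : 0 < a) :
    Tendsto (fun T : ℝ =>
        ∫ y in (-T)..T, (a * Real.sin y - y * Real.cos y) / (y * (a ^ 2 + y ^ 2)))
      atTop
      (nhds (π * (1 - 2 * Real.exp (-a)) / a)) := by
  set g : ℝ → ℝ := fun y => a * (sinc y / (a ^ 2 + y ^ 2)) - cos y / (a ^ 2 + y ^ 2)
  have hfg : (fun y => (a * sin y - y * cos y) / (y * (a ^ 2 + y ^ 2))) =ᵐ[volume] g := by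
    filter_upwards [Measure.ae_ne volume 0] with y hy
    have : a ^ 2 + y ^ 2 ≠ 0 := by positivity
    simp only [g, sinc_of_ne_zero hy]
    field_simp
  have hsinc : Integrable fun y => sinc y / (a ^ 2 + y ^ 2) :=
    integrable_div_sq_add_sq_of_abs_le_one (by fun_prop) abs_sinc_le_one ha.ne'
  have hcos : Integrable fun y => cos y / (a ^ 2 + y ^ 2) :=
    integrable_div_sq_add_sq_of_abs_le_one (by fun_prop) abs_cos_le_one ha.ne'
  have hg : ∫ y, g y = π * (1 - 2 * exp (-a)) / a := by
    have hcos_val : ∫ y, cos y / (a ^ 2 + y ^ 2) = π / a * exp (-a) := by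
      simpa using integral_cos_mul_div_sq_add_sq ha 1
    rw [integral_sub (hsinc.const_mul a) hcos, integral_const_mul, integral_sinc_div_sq_add_sq ha,
      hcos_val]
    field_simp
    ring
  rw [← hg, ← integral_congr_ae hfg]
  exact intervalIntegral_tendsto_integral (((hsinc.const_mul a).sub hcos).congr hfg.symm)
    tendsto_neg_atTop_atBot tendsto_id
end

section
/- Let n ≥ 1, μ > 0, ν₁,…,νₙ > 0, a₀ > 0, and a, b ∈ ℝⁿ with all aₖ, bₖ > 0. Then ∫_{(0,∞)ⁿ} e^{-⟨b,x⟩} (a₀ + ⟨a,x⟩)^{-μ} ∏ₖ xₖ^{νₖ−1} dx = (∏ₖ Γ(νₖ) / Γ(μ)) ∫₀^∞ e^{-a₀ t} t^{μ−1} ∏ₖ (bₖ + aₖ t)^{-νₖ} dt. -/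
open Real MeasureTheory

/-!
Write `(a₀ + ⟨a, x⟩) ^ (-μ) = Γ(μ)⁻¹ ∫₀^∞ t ^ (μ - 1) e ^ (-(a₀ + ⟨a, x⟩) t) dt` and exchange the
order of integration in the nonnegative kernel
`t ^ (μ - 1) e ^ (-a₀ t) ∏ₖ xₖ ^ (νₖ - 1) e ^ (-(bₖ + aₖ t) xₖ)`; Fubini applies because
`(a₀ + ⟨a, x⟩) ^ (-μ) ≤ a₀ ^ (-μ)` on the positive orthant. For fixed `t` the `x`-integral splits
into one-dimensional Gamma integrals `∫₀^∞ y ^ (ν - 1) e ^ (-c y) dy = Γ(ν) c ^ (-ν)`.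
-/

open Set Function

section PiProduct

variable {𝕜 ι : Type*} [RCLike 𝕜] [Fintype ι] {E : ι → Type*} [∀ i, MeasurableSpace (E i)]
  {μ : ∀ i, Measure (E i)} [∀ i, SigmaFinite (μ i)]

theorem setIntegral_univ_pi_prod (s : ∀ i, Set (E i)) (f : ∀ i, E i → 𝕜) :
    ∫ x in univ.pi s, ∏ i, f i (x i) ∂Measure.pi μ = ∏ i, ∫ y in s i, f i y ∂μ i := by
  rw [Measure.restrict_pi_pi]
  exact integral_fintype_prod_eq_prod f

theorem integrableOn_univ_pi_prod {s : ∀ i, Set (E i)} {f : ∀ i, E i → 𝕜}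
    (hf : ∀ i, IntegrableOn (f i) (s i) (μ i)) :
    IntegrableOn (fun x => ∏ i, f i (x i)) (univ.pi s) (Measure.pi μ) := by
  rw [IntegrableOn, Measure.restrict_pi_pi]
  exact Integrable.fintype_prod_dep hf

end PiProduct

theorem integral_rpow_mul_exp_neg_mul_Ioi_eq_Gamma_mul_rpow_neg {p c : ℝ} (hp : 0 < p)
    (hc : 0 < c) : ∫ t in Ioi (0:ℝ), t ^ (p - 1) * exp (-(c * t)) = Gamma p * c ^ (-p) := by
  rw [integral_rpow_mul_exp_neg_mul_Ioi hp hc, one_div, inv_rpow hc.le, rpow_neg hc.le, mul_comm]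

theorem integrableOn_rpow_mul_exp_neg_mul_Ioi {p c : ℝ} (hp : 0 < p) (hc : 0 < c) :
    IntegrableOn (fun t => t ^ (p - 1) * exp (-(c * t))) (Ioi 0) :=
  .of_integral_ne_zero <| by
    rw [integral_rpow_mul_exp_neg_mul_Ioi_eq_Gamma_mul_rpow_neg hp hc]; positivity

theorem prod_rpow_mul_exp_neg_mul {ι : Type*} [Fintype ι] (c p x : ι → ℝ) :
    ∏ k, (x k ^ (p k - 1) * exp (-(c k * x k))) =
      exp (-∑ k, c k * x k) * ∏ k, x k ^ (p k - 1) := by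
  rw [Finset.prod_mul_distrib, ← exp_sum, Finset.sum_neg_distrib, mul_comm]

namespace EulerLaplace

variable {ι : Type*} [Fintype ι] (a₀ μ : ℝ) (a b ν : ι → ℝ)

noncomputable def kernel (x : ι → ℝ) (t : ℝ) : ℝ :=
  t ^ (μ - 1) * exp (-(a₀ * t)) * ∏ k, (x k ^ (ν k - 1) * exp (-((b k + a k * t) * x k)))

theorem kernel_eq (x : ι → ℝ) (t : ℝ) :
    kernel a₀ μ a b ν x t = (exp (-∑ k, b k * x k) * ∏ k, x k ^ (ν k - 1)) *
      (t ^ (μ - 1) * exp (-((a₀ + ∑ k, a k * x k) * t))) := by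
  have h_exp : exp (-(a₀ * t)) * exp (-∑ k, (b k + a k * t) * x k) =
      exp (-∑ k, b k * x k) * exp (-((a₀ + ∑ k, a k * x k) * t)) := by
    rw [← exp_add, ← exp_add]
    congr 1
    simp only [add_mul, Finset.sum_add_distrib, Finset.sum_mul]
    ring_nf
  rw [kernel, prod_rpow_mul_exp_neg_mul]
  linear_combination (t ^ (μ - 1) * ∏ k, x k ^ (ν k - 1)) * h_exp

theorem measurable_kernel : Measurable (uncurry (kernel a₀ μ a b ν)) := by
  unfold kernel
  fun_prop

variable {a₀ μ a b ν}

theorem add_sum_mul_pos (ha₀ : 0 < a₀) (ha : ∀ k, 0 ≤ a k) {x : ι → ℝ} (hx : ∀ k, 0 ≤ x k) :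
    0 < a₀ + ∑ k, a k * x k :=
  add_pos_of_pos_of_nonneg ha₀ (Finset.sum_nonneg fun k _ => mul_nonneg (ha k) (hx k))

theorem kernel_nonneg {x : ι → ℝ} {t : ℝ} (hx : ∀ k, 0 ≤ x k) (ht : 0 ≤ t) :
    0 ≤ kernel a₀ μ a b ν x t := by
  have h_prod : 0 ≤ ∏ k, (x k ^ (ν k - 1) * exp (-((b k + a k * t) * x k))) :=
    Finset.prod_nonneg fun k _ => mul_nonneg (rpow_nonneg (hx k) _) (exp_pos _).le
  exact mul_nonneg (mul_nonneg (rpow_nonneg ht _) (exp_pos _).le) h_prod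

theorem integral_kernel_Ioi (hμ : 0 < μ) {x : ι → ℝ} (hx : 0 < a₀ + ∑ k, a k * x k) :
    ∫ t in Ioi 0, kernel a₀ μ a b ν x t =
      Gamma μ * (exp (-∑ k, b k * x k) * (a₀ + ∑ k, a k * x k) ^ (-μ) *
        ∏ k, x k ^ (ν k - 1)) := by
  simp_rw [kernel_eq]
  rw [integral_const_mul, integral_rpow_mul_exp_neg_mul_Ioi_eq_Gamma_mul_rpow_neg hμ hx]
  ring

theorem integral_kernel_univ_pi (hν : ∀ k, 0 < ν k) {t : ℝ} (ht : ∀ k, 0 < b k + a k * t) :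
    ∫ x in univ.pi fun _ => Ioi 0, kernel a₀ μ a b ν x t =
      (∏ k, Gamma (ν k)) * (exp (-(a₀ * t)) * t ^ (μ - 1) * ∏ k, (b k + a k * t) ^ (-ν k)) := by
  simp_rw [kernel]
  rw [integral_const_mul, volume_pi, setIntegral_univ_pi_prod (μ := fun _ => volume)
    (fun _ => Ioi (0:ℝ)) (fun k y => y ^ (ν k - 1) * exp (-((b k + a k * t) * y)))]
  simp_rw [integral_rpow_mul_exp_neg_mul_Ioi_eq_Gamma_mul_rpow_neg (hν _) (ht _),
    Finset.prod_mul_distrib]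
  ring

theorem integrableOn_integrand (hμ : 0 ≤ μ) (ha₀ : 0 < a₀) (ha : ∀ k, 0 ≤ a k)
    (hb : ∀ k, 0 < b k) (hν : ∀ k, 0 < ν k) :
    IntegrableOn (fun x => exp (-∑ k, b k * x k) * (a₀ + ∑ k, a k * x k) ^ (-μ) *
      ∏ k, x k ^ (ν k - 1)) (univ.pi fun _ : ι => Ioi 0) := by
  have h_prod : IntegrableOn (fun x => ∏ k, (x k ^ (ν k - 1) * exp (-(b k * x k))))
      (univ.pi fun _ : ι => Ioi 0) :=
    integrableOn_univ_pi_prod fun k => integrableOn_rpow_mul_exp_neg_mul_Ioi (hν k) (hb k)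
  simp_rw [prod_rpow_mul_exp_neg_mul] at h_prod
  refine (h_prod.mul_const (a₀ ^ (-μ))).mono' (by fun_prop) ?_
  filter_upwards [ae_restrict_mem (MeasurableSet.univ_pi fun _ => measurableSet_Ioi)] with x hx
  have hx_nonneg : ∀ k, 0 ≤ x k := fun k => (hx k (mem_univ k)).le
  have h_sum : 0 ≤ ∑ k, a k * x k :=
    Finset.sum_nonneg fun k _ => mul_nonneg (ha k) (hx_nonneg k)
  have h_le : (a₀ + ∑ k, a k * x k) ^ (-μ) ≤ a₀ ^ (-μ) :=
    rpow_le_rpow_of_nonpos ha₀ (by linarith) (by linarith)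
  have h_prod : 0 ≤ ∏ k, x k ^ (ν k - 1) :=
    Finset.prod_nonneg fun k _ => rpow_nonneg (hx_nonneg k) (ν k - 1)
  rw [norm_of_nonneg (by positivity)]
  calc _ = (exp (-∑ k, b k * x k) * ∏ k, x k ^ (ν k - 1)) * (a₀ + ∑ k, a k * x k) ^ (-μ) := by
        ring
    _ ≤ _ := mul_le_mul_of_nonneg_left h_le (by positivity)

theorem integrable_kernel (hμ : 0 < μ) (ha₀ : 0 < a₀) (ha : ∀ k, 0 ≤ a k) (hb : ∀ k, 0 < b k)
    (hν : ∀ k, 0 < ν k) :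
    Integrable (uncurry (kernel a₀ μ a b ν))
      ((volume.restrict (univ.pi fun _ => Ioi 0)).prod (volume.restrict (Ioi 0))) := by
  have h_pos : ∀ᵐ x ∂volume.restrict (univ.pi fun _ : ι => Ioi (0:ℝ)),
      (∀ k, 0 ≤ x k) ∧ 0 < a₀ + ∑ k, a k * x k := by
    filter_upwards [ae_restrict_mem (MeasurableSet.univ_pi fun _ => measurableSet_Ioi)] with x hx
    have hx_nonneg : ∀ k, 0 ≤ x k := fun k => (hx k (mem_univ k)).le
    exact ⟨hx_nonneg, add_sum_mul_pos ha₀ ha hx_nonneg⟩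
  rw [integrable_prod_iff (measurable_kernel a₀ μ a b ν).aestronglyMeasurable]
  constructor
  · filter_upwards [h_pos] with x hx
    simp_rw [uncurry_apply_pair, kernel_eq]
    exact (integrableOn_rpow_mul_exp_neg_mul_Ioi hμ hx.2).const_mul _
  · refine ((integrableOn_integrand hμ.le ha₀ ha hb hν).const_mul (Gamma μ)).congr ?_
    filter_upwards [h_pos] with x hx
    obtain ⟨hx_nonneg, hx⟩ := hx
    rw [← integral_kernel_Ioi hμ hx]
    refine setIntegral_congr_fun measurableSet_Ioi fun t ht => ?_
    exact (norm_of_nonneg (kernel_nonneg hx_nonneg ht.le)).symm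

end EulerLaplace

open EulerLaplace in
theorem multivariate_euler_laplace_general (n : ℕ) (μ : ℝ) (hμ : 0 < μ)
    (ν : Fin n → ℝ) (hν : ∀ k, 0 < ν k) (a₀ : ℝ) (ha₀ : 0 < a₀)
    (a b : Fin n → ℝ) (ha : ∀ k, 0 < a k) (hb : ∀ k, 0 < b k) :
    (∫ x in Set.univ.pi (fun _ : Fin n => Set.Ioi (0:ℝ)),
        Real.exp (-∑ k, b k * x k) * (a₀ + ∑ k, a k * x k) ^ (-μ) *
          ∏ k, x k ^ (ν k - 1)) =
      ((∏ k, Real.Gamma (ν k)) / Real.Gamma μ) *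
        ∫ t in Set.Ioi (0:ℝ),
          Real.exp (-(a₀ * t)) * t ^ (μ - 1) * ∏ k, (b k + a k * t) ^ (-ν k) := by
  have ha' : ∀ k, 0 ≤ a k := fun k => (ha k).le
  have h_inner : ∀ x ∈ univ.pi fun _ : Fin n => Ioi (0:ℝ),
      exp (-∑ k, b k * x k) * (a₀ + ∑ k, a k * x k) ^ (-μ) * ∏ k, x k ^ (ν k - 1) =
        (Gamma μ)⁻¹ * ∫ t in Ioi 0, kernel a₀ μ a b ν x t := fun x hx => by
    rw [integral_kernel_Ioi hμ (add_sum_mul_pos ha₀ ha' fun k => (hx k (mem_univ k)).le),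
      inv_mul_cancel_left₀ (Gamma_pos_of_pos hμ).ne']
  calc _ = (Gamma μ)⁻¹ * ∫ x in univ.pi fun _ => Ioi 0, ∫ t in Ioi 0, kernel a₀ μ a b ν x t := by
        rw [setIntegral_congr_fun (MeasurableSet.univ_pi fun _ => measurableSet_Ioi) h_inner,
          integral_const_mul]
    _ = (Gamma μ)⁻¹ * ∫ t in Ioi 0, ∫ x in univ.pi fun _ => Ioi 0, kernel a₀ μ a b ν x t := by
        rw [integral_integral_swap (integrable_kernel hμ ha₀ ha' hb hν)]
    _ = (Gamma μ)⁻¹ * ∫ t in Ioi 0, (∏ k, Gamma (ν k)) *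
          (exp (-(a₀ * t)) * t ^ (μ - 1) * ∏ k, (b k + a k * t) ^ (-ν k)) := by
        congr 1
        refine setIntegral_congr_fun measurableSet_Ioi fun t ht => ?_
        exact integral_kernel_univ_pi hν fun k => add_pos_of_pos_of_nonneg (hb k)
          (mul_nonneg (ha' k) ht.le)
    _ = _ := by
        rw [integral_const_mul]
        ring

theorem multivariate_euler_laplace (n : ℕ) (hn : 1 ≤ n) (μ : ℝ) (hμ : 0 < μ)
    (ν : Fin n → ℝ) (hν : ∀ k, 0 < ν k) (a₀ : ℝ) (ha₀ : 0 < a₀)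
    (a b : Fin n → ℝ) (ha : ∀ k, 0 < a k) (hb : ∀ k, 0 < b k) :
    (∫ x in Set.univ.pi (fun _ : Fin n => Set.Ioi (0:ℝ)),
        Real.exp (-∑ k, b k * x k) * (a₀ + ∑ k, a k * x k) ^ (-μ) *
          ∏ k, x k ^ (ν k - 1)) =
      ((∏ k, Real.Gamma (ν k)) / Real.Gamma μ) *
        ∫ t in Set.Ioi (0:ℝ),
          Real.exp (-(a₀ * t)) * t ^ (μ - 1) * ∏ k, (b k + a k * t) ^ (-ν k) :=
  multivariate_euler_laplace_general n μ hμ ν hν a₀ ha₀ a b ha hb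
end
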